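/- With the channel 𝓛_D from the long-range discrete-time walk and initial state σ₀ = |s⟩⟨s| (uniform superposition over N basis states), the ground-state overlap after m steps equals μ_g(m) = ⟨g|σ_m|g⟩ = 1/N + ((N-1)/N)·(1 - cos^{2m}(ζ)), where ζ = η√(N-1)√τ. -/

import Mathlib

/-! The coupling `L̃` is `c = η√(N-1)` times the block matrix `X` of the partial isometry
`|g⟩⟨s̃|`, and `X³ = X`, so `exp (∓iθ L̃) = 1 ∓ i sin ζ • X + (cos ζ - 1) • X²` with `θ = √τ`,
`ζ = cθ`.
Tracing out the ancilla, one step of the walk is the channel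
`ρ ↦ K ρ K + sin² ζ • |g⟩⟨s̃| ρ |s̃⟩⟨g|` with `K = 1 + (cos ζ - 1) • |s̃⟩⟨s̃|`. It moves the
fraction `sin² ζ` of the population of `|s̃⟩` onto `|g⟩` and leaves the rest of both in place.
Since `σ₀` puts `1/N` on `|g⟩` and `(N-1)/N` on `|s̃⟩`, after `m` steps `|s̃⟩` keeps
`(N-1)/N · cos^{2m} ζ` and the rest of it has moved to `|g⟩`. -/

open Matrix

/-- Partial trace over the single ancilla qubit, in the block-matrix picture where
the ancilla index labels the two diagonal blocks. -/
noncomputable def ancillaTrace {N : ℕ} (M : Matrix (Fin N ⊕ Fin N) (Fin N ⊕ Fin N) ℂ) :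
    Matrix (Fin N) (Fin N) ℂ :=
  M.toBlocks₁₁ + M.toBlocks₂₂

open scoped Nat

theorem exp_smul_of_pow_three_eq_self {𝔸 : Type*} [Ring 𝔸] [Algebra ℂ 𝔸] [TopologicalSpace 𝔸]
    [IsTopologicalRing 𝔸] [ContinuousSMul ℂ 𝔸] [T2Space 𝔸] {X : 𝔸} (hX : X ^ 3 = X) (z : ℂ) :
    NormedSpace.exp (z • X) = 1 + Complex.sinh z • X + (Complex.cosh z - 1) • X ^ 2 := by
  have hodd : ∀ k : ℕ, X ^ (2 * k + 1) = X := by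
    intro k
    induction k with
    | zero => simp
    | succ k ih => rw [show 2 * (k + 1) + 1 = 2 * k + 1 + 2 by ring, pow_add, ih, ← pow_succ', hX]
  have heven : ∀ k : ℕ, X ^ (2 * k) = X ^ 2 + if k = 0 then 1 - X ^ 2 else 0 := by
    rintro (_ | k)
    · simp
    · rw [if_neg k.succ_ne_zero, add_zero, mul_add_one, pow_succ, hodd, ← pow_two]
  have hOdd : HasSum (fun k : ℕ => (z ^ (2 * k + 1) / (2 * k + 1)! : ℂ) • X ^ (2 * k + 1))
      (Complex.sinh z • X) := by
    simpa only [hodd] using (Complex.hasSum_sinh z).smul_const X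
  -- `1 - X ^ 2` corrects the `k = 0` term, where `X ^ 0 = 1` rather than `X ^ 2`
  have hEven : HasSum (fun k : ℕ => (z ^ (2 * k) / (2 * k)! : ℂ) • X ^ (2 * k))
      (Complex.cosh z • X ^ 2 + (1 - X ^ 2)) := by
    convert ((Complex.hasSum_cosh z).smul_const (X ^ 2)).add (hasSum_ite_eq 0 (1 - X ^ 2))
      using 2 with k
    rw [heven, smul_add]
    split_ifs with hk <;> simp [hk]
  have hsum : HasSum (fun n : ℕ => (z ^ n / n ! : ℂ) • X ^ n) _ := hEven.even_add_odd hOdd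
  rw [NormedSpace.exp_eq_tsum ℂ]
  simp only [smul_pow, smul_smul, inv_mul_eq_div]
  rw [hsum.tsum_eq]
  module

theorem ancillaTrace_conj_fromBlocks {N : ℕ} (A B ρ : Matrix (Fin N) (Fin N) ℂ) (u v w : ℂ) :
    ancillaTrace
      ((1 + u • fromBlocks 0 B A 0 + v • fromBlocks 0 B A 0 ^ 2) * fromBlocks ρ 0 0 0 *
        (1 + w • fromBlocks 0 B A 0 + v • fromBlocks 0 B A 0 ^ 2)) =
      (1 + v • (B * A)) * ρ * (1 + v • (B * A)) + (u * w) • (A * ρ * B) := by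
  rw [← fromBlocks_one, pow_two]
  simp only [fromBlocks_multiply, fromBlocks_smul, fromBlocks_add, ancillaTrace,
    toBlocks_fromBlocks₁₁, toBlocks_fromBlocks₂₂, Matrix.mul_zero, Matrix.zero_mul, smul_zero,
    add_zero, zero_add, Matrix.smul_mul, Matrix.mul_smul, Matrix.mul_one, Matrix.one_mul,
    Matrix.add_mul, Matrix.mul_add, smul_smul, Matrix.mul_assoc]
  rw [mul_comm w u]

theorem dotProduct_mul_mul_mulVec {n R : Type*} [Fintype n] [NonUnitalSemiring R] (x y : n → R)
    (P ρ Q : Matrix n n R) : x ⬝ᵥ (P * ρ * Q) *ᵥ y = (x ᵥ* P) ⬝ᵥ ρ *ᵥ (Q *ᵥ y) := by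
  rw [← mulVec_mulVec, ← mulVec_mulVec, dotProduct_mulVec]

section TransferChannel

variable {n : Type*} [Fintype n] [DecidableEq n] {g t : n → ℂ}

noncomputable def transferChannel (g t : n → ℂ) (ζ : ℝ) (ρ : Matrix n n ℂ) : Matrix n n ℂ :=
  (1 + (Real.cos ζ - 1 : ℂ) • vecMulVec t (star t)) * ρ *
      (1 + (Real.cos ζ - 1 : ℂ) • vecMulVec t (star t)) +
    (Real.sin ζ ^ 2 : ℂ) • (vecMulVec g (star t) * ρ * vecMulVec t (star g))

theorem fromBlocks_vecMulVec_pow_three (hg : star g ⬝ᵥ g = 1) (ht : star t ⬝ᵥ t = 1) :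
    fromBlocks 0 (vecMulVec t (star g)) (vecMulVec g (star t)) 0 ^ 3 =
      fromBlocks 0 (vecMulVec t (star g)) (vecMulVec g (star t)) 0 := by
  simp only [pow_succ, pow_zero, Matrix.one_mul, fromBlocks_multiply, Matrix.mul_zero,
    Matrix.zero_mul, add_zero, zero_add, vecMulVec_mul_vecMulVec, hg, ht, one_smul]

theorem one_add_smul_vecMulVec_mulVec (x : n → ℂ) (v : ℂ) :
    (1 + v • vecMulVec t (star t)) *ᵥ x = x + (v * (star t ⬝ᵥ x)) • t := by
  rw [add_mulVec, one_mulVec, smul_mulVec, vecMulVec_mulVec, op_smul_eq_smul, smul_smul]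

theorem vecMul_one_add_smul_vecMulVec (x : n → ℂ) (v : ℂ) :
    x ᵥ* (1 + v • vecMulVec t (star t)) = x + (v * (x ⬝ᵥ t)) • star t := by
  rw [vecMul_add, vecMul_one, vecMul_smul, vecMul_vecMulVec, smul_smul]

theorem dotProduct_transferChannel_mulVec_target (hg : star g ⬝ᵥ g = 1)
    (htg : star t ⬝ᵥ g = 0) (ζ : ℝ) (ρ : Matrix n n ℂ) :
    star g ⬝ᵥ transferChannel g t ζ ρ *ᵥ g =
      star g ⬝ᵥ ρ *ᵥ g + Real.sin ζ ^ 2 * (star t ⬝ᵥ ρ *ᵥ t) := by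
  have hgt : star g ⬝ᵥ t = 0 := by rw [star_dotProduct, htg, star_zero]
  rw [transferChannel, add_mulVec, dotProduct_add, smul_mulVec, dotProduct_smul,
    dotProduct_mul_mul_mulVec, dotProduct_mul_mul_mulVec, one_add_smul_vecMulVec_mulVec,
    vecMul_one_add_smul_vecMulVec, vecMul_vecMulVec, vecMulVec_mulVec, hg, hgt, htg]
  simp

theorem dotProduct_transferChannel_mulVec_source (ht : star t ⬝ᵥ t = 1)
    (htg : star t ⬝ᵥ g = 0) (ζ : ℝ) (ρ : Matrix n n ℂ) :
    star t ⬝ᵥ transferChannel g t ζ ρ *ᵥ t = Real.cos ζ ^ 2 * (star t ⬝ᵥ ρ *ᵥ t) := by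
  rw [transferChannel, add_mulVec, dotProduct_add, smul_mulVec, dotProduct_smul,
    dotProduct_mul_mul_mulVec, dotProduct_mul_mul_mulVec, one_add_smul_vecMulVec_mulVec,
    vecMul_one_add_smul_vecMulVec, vecMul_vecMulVec, htg, ht]
  simp only [mulVec_add, mulVec_smul, dotProduct_add, dotProduct_smul, add_dotProduct,
    smul_dotProduct, zero_dotProduct, mul_one, zero_smul, smul_eq_mul]
  ring

end TransferChannel

theorem ancillaTrace_exp_conj_eq_transferChannel {N : ℕ} {g t : Fin N → ℂ}
    (hg : star g ⬝ᵥ g = 1) (ht : star t ⬝ᵥ t = 1) (c θ : ℝ) (ρ : Matrix (Fin N) (Fin N) ℂ) :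
    ancillaTrace
        (NormedSpace.exp ((-(Complex.I * θ)) •
            fromBlocks 0 ((c : ℂ) • vecMulVec g (star t))ᴴ ((c : ℂ) • vecMulVec g (star t)) 0) *
          fromBlocks ρ 0 0 0 *
          NormedSpace.exp ((Complex.I * θ) •
            fromBlocks 0 ((c : ℂ) • vecMulVec g (star t))ᴴ ((c : ℂ) • vecMulVec g (star t)) 0)) =
      transferChannel g t (c * θ) ρ := by
  have hblocks :
      fromBlocks 0 ((c : ℂ) • vecMulVec g (star t))ᴴ ((c : ℂ) • vecMulVec g (star t)) 0 =
        (c : ℂ) • fromBlocks 0 (vecMulVec t (star g)) (vecMulVec g (star t)) 0 := by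
    rw [conjTranspose_smul, conjTranspose_vecMulVec, star_star, Complex.star_def,
      Complex.conj_ofReal, fromBlocks_smul, smul_zero]
  have hleft : -(Complex.I * θ) * c = (-(c * θ) : ℝ) * Complex.I := by push_cast; ring
  have hright : Complex.I * θ * c = (c * θ : ℝ) * Complex.I := by push_cast; ring
  rw [hblocks, smul_smul, smul_smul, hleft, hright,
    exp_smul_of_pow_three_eq_self (fromBlocks_vecMulVec_pow_three hg ht),
    exp_smul_of_pow_three_eq_self (fromBlocks_vecMulVec_pow_three hg ht),
    Complex.cosh_mul_I, Complex.cosh_mul_I, Complex.sinh_mul_I, Complex.sinh_mul_I,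
    Complex.ofReal_neg, Complex.cos_neg, Complex.sin_neg, ← Complex.ofReal_cos,
    ← Complex.ofReal_sin, ancillaTrace_conj_fromBlocks, vecMulVec_mul_vecMulVec, hg, one_smul,
    transferChannel]
  congr 2
  linear_combination -(Real.sin (c * θ) : ℂ) ^ 2 * Complex.I_sq

theorem eq_add_one_sub_pow_mul_of_recurrence {R : Type*} [CommRing R] {a b : ℕ → R} {r : R}
    (ha : ∀ m, a (m + 1) = a m + (1 - r) * b m) (hb : ∀ m, b (m + 1) = r * b m) (m : ℕ) :
    a m = a 0 + (1 - r ^ m) * b 0 := by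
  have hb_pow : ∀ m, b m = r ^ m * b 0 := by
    intro m
    induction m with
    | zero => rw [pow_zero, one_mul]
    | succ m ih => rw [hb, ih, pow_succ']; ring
  induction m with
  | zero => rw [pow_zero, sub_self, zero_mul, add_zero]
  | succ m ih => rw [ha, ih, hb_pow m]; ring

theorem dotProduct_vecMulVec_star_mulVec {n : Type*} [Fintype n] (x s : n → ℂ) :
    star x ⬝ᵥ vecMulVec s (star s) *ᵥ x = Complex.normSq (star x ⬝ᵥ s) := by
  rw [vecMulVec_mulVec, op_smul_eq_smul, dotProduct_smul, smul_eq_mul, star_dotProduct,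
    Complex.star_def, Complex.normSq_eq_conj_mul_self]

theorem star_uniformCompl_dotProduct_self {N : ℕ} (hN : 2 ≤ N) (g0 : Fin N) :
    star (fun i : Fin N => if i = g0 then 0 else ((1 / Real.sqrt ((N : ℝ) - 1) : ℝ) : ℂ)) ⬝ᵥ
      (fun i => if i = g0 then 0 else ((1 / Real.sqrt ((N : ℝ) - 1) : ℝ) : ℂ)) = 1 := by
  have hN1 : (0 : ℝ) < N - 1 := by
    have : (2 : ℝ) ≤ N := by exact_mod_cast hN
    linarith
  have h : ((N : ℝ) - 1) * ((√(N - 1))⁻¹ * (√(N - 1))⁻¹) = 1 := by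
    rw [← mul_inv, Real.mul_self_sqrt hN1.le, mul_inv_cancel₀ hN1.ne']
  simp [dotProduct, apply_ite, ite_mul, Finset.sum_ite, Finset.filter_ne']
  rw [Nat.cast_sub (by omega)]
  exact_mod_cast h

theorem star_uniformCompl_dotProduct_uniform {N : ℕ} (hN : 1 ≤ N) (g0 : Fin N) :
    star (fun i : Fin N => if i = g0 then 0 else ((1 / Real.sqrt ((N : ℝ) - 1) : ℝ) : ℂ)) ⬝ᵥ
      (fun _ => ((1 / Real.sqrt N : ℝ) : ℂ)) = ((Real.sqrt (N - 1) / Real.sqrt N : ℝ) : ℂ) := by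
  have h : ((N : ℝ) - 1) * ((√(N - 1))⁻¹ * (√N)⁻¹) = √(N - 1) / √N := by
    rw [← mul_assoc, ← div_eq_mul_inv (a := (N : ℝ) - 1), Real.div_sqrt, div_eq_mul_inv]
  simp [dotProduct, apply_ite, ite_mul, Finset.sum_ite, Finset.filter_ne']
  rw [Nat.cast_sub hN]
  exact_mod_cast h

theorem stmt_7_general (N : ℕ) (hN : 2 ≤ N) (η τ : ℝ)
    (g0 : Fin N)
    (g s stilde : Fin N → ℂ)
    (hgdef : g = fun i => if i = g0 then 1 else 0)
    (hsdef : s = fun _ => ((1 / Real.sqrt N : ℝ) : ℂ))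
    (hstdef : stilde = fun i => if i = g0 then 0 else ((1 / Real.sqrt ((N : ℝ) - 1) : ℝ) : ℂ))
    (L : Matrix (Fin N) (Fin N) ℂ)
    (hL : L = ((η * Real.sqrt ((N : ℝ) - 1) : ℝ) : ℂ) • vecMulVec g (star stilde))
    (Ltilde : Matrix (Fin N ⊕ Fin N) (Fin N ⊕ Fin N) ℂ)
    (hLtilde : Ltilde = fromBlocks 0 Lᴴ L 0)
    (ζ : ℝ) (hζ : ζ = η * Real.sqrt ((N : ℝ) - 1) * Real.sqrt τ)
    (σ : ℕ → Matrix (Fin N) (Fin N) ℂ)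
    (hσ0 : σ 0 = vecMulVec s (star s))
    (hσ : ∀ m : ℕ, σ (m + 1) =
      ancillaTrace
        (NormedSpace.exp ((-(Complex.I * (Real.sqrt τ : ℂ))) • Ltilde) *
          fromBlocks (σ m) 0 0 0 *
          NormedSpace.exp ((Complex.I * (Real.sqrt τ : ℂ)) • Ltilde))) :
    ∀ m : ℕ,
      star g ⬝ᵥ (σ m) *ᵥ g =
        ((1 / (N : ℝ) + ((N : ℝ) - 1) / (N : ℝ) * (1 - Real.cos ζ ^ (2 * m)) : ℝ) : ℂ) := by
  have hg : star g ⬝ᵥ g = 1 := by simp [hgdef, dotProduct]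
  have ht : star stilde ⬝ᵥ stilde = 1 := hstdef ▸ star_uniformCompl_dotProduct_self hN g0
  have htg : star stilde ⬝ᵥ g = 0 := by simp [hgdef, hstdef, dotProduct]
  have hgs : star g ⬝ᵥ s = ((1 / √N : ℝ) : ℂ) := by simp [hgdef, hsdef, dotProduct]
  have hts : star stilde ⬝ᵥ s = ((√(N - 1) / √N : ℝ) : ℂ) :=
    hstdef ▸ hsdef ▸ star_uniformCompl_dotProduct_uniform (by omega) g0
  have hstep : ∀ m, σ (m + 1) = transferChannel g stilde ζ (σ m) := fun m => by
    rw [hσ m, hLtilde, hL, hζ]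
    exact ancillaTrace_exp_conj_eq_transferChannel hg ht _ _ _
  intro m
  rw [eq_add_one_sub_pow_mul_of_recurrence (a := fun m => star g ⬝ᵥ σ m *ᵥ g)
    (b := fun m => star stilde ⬝ᵥ σ m *ᵥ stilde) (r := (Real.cos ζ : ℂ) ^ 2) _ _ m]
  · simp only [hσ0, dotProduct_vecMulVec_star_mulVec, hgs, hts, Complex.normSq_ofReal,
      div_mul_div_comm, Real.mul_self_sqrt (Nat.cast_nonneg N),
      Real.mul_self_sqrt (sub_nonneg.2 (Nat.one_le_cast.2 (by omega : 1 ≤ N)))]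
    push_cast
    ring
  · intro m
    rw [hstep, dotProduct_transferChannel_mulVec_target hg htg, ← Complex.ofReal_pow, Real.sin_sq]
    push_cast
    ring
  · intro m
    rw [hstep, dotProduct_transferChannel_mulVec_source ht htg]

/-- Ground-state overlap of the long-range discrete-time open quantum walk after `m`
steps, starting from the uniform superposition:
`μ_g(m) = 1/N + ((N-1)/N)(1 - cos^{2m} ζ)` with `ζ = η√(N-1)√τ`. -/
theorem stmt_7 (N : ℕ) (hN : 2 ≤ N) (η τ : ℝ) (hη : 0 < η) (hτ : 0 < τ)
    (g0 : Fin N)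
    (g s stilde : Fin N → ℂ)
    (hgdef : g = fun i => if i = g0 then 1 else 0)
    (hsdef : s = fun _ => ((1 / Real.sqrt N : ℝ) : ℂ))
    (hstdef : stilde = fun i => if i = g0 then 0 else ((1 / Real.sqrt ((N : ℝ) - 1) : ℝ) : ℂ))
    (L : Matrix (Fin N) (Fin N) ℂ)
    (hL : L = ((η * Real.sqrt ((N : ℝ) - 1) : ℝ) : ℂ) • vecMulVec g (star stilde))
    (Ltilde : Matrix (Fin N ⊕ Fin N) (Fin N ⊕ Fin N) ℂ)
    (hLtilde : Ltilde = fromBlocks 0 Lᴴ L 0)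
    (ζ : ℝ) (hζ : ζ = η * Real.sqrt ((N : ℝ) - 1) * Real.sqrt τ)
    (σ : ℕ → Matrix (Fin N) (Fin N) ℂ)
    (hσ0 : σ 0 = vecMulVec s (star s))
    (hσ : ∀ m : ℕ, σ (m + 1) =
      ancillaTrace
        (NormedSpace.exp ((-(Complex.I * (Real.sqrt τ : ℂ))) • Ltilde) *
          fromBlocks (σ m) 0 0 0 *
          NormedSpace.exp ((Complex.I * (Real.sqrt τ : ℂ)) • Ltilde))) :
    ∀ m : ℕ,
      star g ⬝ᵥ (σ m) *ᵥ g =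
        ((1 / (N : ℝ) + ((N : ℝ) - 1) / (N : ℝ) * (1 - Real.cos ζ ^ (2 * m)) : ℝ) : ℂ) :=
  stmt_7_general N hN η τ g0 g s stilde hgdef hsdef hstdef L hL Ltilde hLtilde ζ hζ σ hσ0 hσ
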